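/- For real s > 1, (1 + ∑_{p prime} p^(-s)) / ζ(s) ≤ 1 + (∑_{p prime} p^(-s))^2, where ζ is the Riemann zeta function. -/

import Mathlib

/-!
The Dirichlet series of `ζ(s)` has nonnegative terms, and `1 + P(s)` is the part of it indexed by
`1` and the primes, so `1 + P(s) ≤ ζ(s)` and the quotient is already at most `1`.
-/

theorem riemannZeta_re_eq_tsum_rpow {s : ℝ} (hs : 1 < s) :
    (riemannZeta s).re = ∑' n : ℕ, (n : ℝ) ^ (-s) := by
  rw [zeta_eq_tsum_one_div_nat_cpow (by simpa using hs)]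
  have hterm (n : ℕ) : 1 / (n : ℂ) ^ (s : ℂ) = (((n : ℝ) ^ (-s) : ℝ) : ℂ) := by
    rw [Real.rpow_neg n.cast_nonneg, Complex.ofReal_inv, Complex.ofReal_cpow n.cast_nonneg,
      Complex.ofReal_natCast, one_div]
  simp only [hterm, ← Complex.ofReal_tsum, Complex.ofReal_re]

theorem add_tsum_primes_le_tsum {f : ℕ → ℝ} (hf_nonneg : ∀ n, 0 ≤ f n) (hf : Summable f) :
    f 1 + ∑' p : Nat.Primes, f p ≤ ∑' n, f n := by
  rw [hf.tsum_eq_add_tsum_ite 1]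
  gcongr f 1 + ?_
  refine Summable.tsum_le_tsum_of_inj Subtype.val Subtype.val_injective
    (fun n _ => by split_ifs <;> simp [hf_nonneg]) (fun p => by simp [p.prop.ne_one])
    (hf.subtype _) (hf.summable_of_eq_zero_or_self fun n => by split_ifs <;> simp)

/-- For real `s > 1`, `(1 + P(s)) / ζ(s) ≤ 1 + P(s)^2`, where
`P(s) = ∑_{p prime} p^(-s)`. -/
theorem remainder_bound (s : ℝ) (hs : 1 < s) :
    (1 + ∑' p : Nat.Primes, (p : ℝ) ^ (-s)) / (riemannZeta s).re
      ≤ 1 + (∑' p : Nat.Primes, (p : ℝ) ^ (-s)) ^ 2 := by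
  have hnonneg (n : ℕ) : 0 ≤ (n : ℝ) ^ (-s) := Real.rpow_nonneg n.cast_nonneg _
  have hsummable : Summable fun n : ℕ => (n : ℝ) ^ (-s) := Real.summable_nat_rpow.2 (by linarith)
  have hle : 1 + ∑' p : Nat.Primes, (p : ℝ) ^ (-s) ≤ (riemannZeta s).re := by
    simpa [riemannZeta_re_eq_tsum_rpow hs] using add_tsum_primes_le_tsum hnonneg hsummable
  calc (1 + ∑' p : Nat.Primes, (p : ℝ) ^ (-s)) / (riemannZeta s).re
      ≤ 1 := div_le_one_of_le₀ hle (riemannZeta_re_eq_tsum_rpow hs ▸ tsum_nonneg hnonneg)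
    _ ≤ 1 + (∑' p : Nat.Primes, (p : ℝ) ^ (-s)) ^ 2 := le_add_of_nonneg_right (sq_nonneg _)
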